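/- arXiv:1801.06881 — 3 statements merged into one kernel-verified Lean document; each statement's English description precedes it below -/
import Mathlib

section
/- Let a, b, c, d ∈ ℂ with ad − bc = 1 (an element g of SL(2,ℂ)), and let z, w ∈ ℂ satisfy cz + d ≠ 0 and −conj(b)·w + conj(a) ≠ 0. Set g(z) = (az+b)/(cz+d) and τ(g)(w) = (conj(d)·w − conj(c))/(−conj(b)·w + conj(a)). Then (1 + g(z)·conj(τ(g)(w))) · (cz+d) · (−b·conj(w) + a) = 1 + z·conj(w). Consequently, with k_c(z,w) = (1 + z·conj(w))² and automorphy factor j(g,z) = (cz+d)^{−2}, one has k_c(g(z), τ(g)(w)) = j(g,z) · k_c(z,w) · conj(j(τ(g),w)). -/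
/-!
Conjugation turns `τ(g)(w)` into the Möbius image of `conj w` under the adjugate matrix
`!![d, -c; -b, a]`, and clearing denominators reduces the covariance to the polynomial identity
`(c z + d)(a - b u) + (a z + b)(d u - c) = (a d - b c)(1 + z u)`.
-/

open Complex ComplexConjugate

section Field

variable {K : Type*} [Field K]

theorem one_add_mobius_mul_mobius_mul_denoms {a b c d z u : K}
    (hz : c * z + d ≠ 0) (hu : -b * u + a ≠ 0) :
    (1 + (a * z + b) / (c * z + d) * ((d * u - c) / (-b * u + a))) *
        (c * z + d) * (-b * u + a) = (a * d - b * c) * (1 + z * u) := by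
  rw [div_mul_div_comm, mul_assoc, add_mul, one_mul, div_mul_cancel₀ _ (mul_ne_zero hz hu)]
  ring

theorem sq_eq_zpow_neg_two_mul_sq_mul_zpow_neg_two {k p q s : K} (hp : p ≠ 0) (hq : q ≠ 0)
    (h : k * p * q = s) : k ^ 2 = p ^ (-2 : ℤ) * s ^ 2 * q ^ (-2 : ℤ) := by
  subst h
  simp only [zpow_neg, zpow_ofNat]
  field_simp

end Field

theorem conj_neg_conj_mul_add_conj (a b w : ℂ) :
    conj (-(conj b) * w + conj a) = -b * conj w + a := by
  simp

/-- Covariance of the compact automorphy kernel `k_c(z,w) = (1+z·conj w)²` of `ℂP¹`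
under `g ∈ SL(2,ℂ)` and its compact conjugate `τ(g)`. -/
theorem kc_covariance (a b c d z w : ℂ) (hg : a * d - b * c = 1)
    (hz : c * z + d ≠ 0) (hw : -(conj b) * w + conj a ≠ 0) :
    (1 + ((a * z + b) / (c * z + d)) *
        conj ((conj d * w - conj c) / (-(conj b) * w + conj a))) *
      (c * z + d) * (-b * conj w + a) = 1 + z * conj w ∧
    (1 + ((a * z + b) / (c * z + d)) *
        conj ((conj d * w - conj c) / (-(conj b) * w + conj a))) ^ 2 =
      (c * z + d) ^ (-2 : ℤ) * (1 + z * conj w) ^ 2 *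
        conj ((-(conj b) * w + conj a) ^ (-2 : ℤ)) := by
  have hconj := conj_neg_conj_mul_add_conj a b w
  have hw' : -b * conj w + a ≠ 0 := hconj ▸ (map_ne_zero conj).mpr hw
  have hτ : conj ((conj d * w - conj c) / (-(conj b) * w + conj a)) =
      (d * conj w - c) / (-b * conj w + a) := by
    rw [map_div₀, hconj]
    simp
  have hfactor := one_add_mobius_mul_mobius_mul_denoms (a := a) (b := b) (c := c) (d := d) hz hw'
  rw [hg, one_mul] at hfactor
  rw [hτ, map_zpow₀, hconj]
  exact ⟨hfactor, sq_eq_zpow_neg_two_mul_sq_mul_zpow_neg_two hz hw' hfactor⟩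
end

section
/- The set 𝒮 = {(z,w) ∈ ℂ×ℂ : 1 + z·conj(w) does not lie in the real interval (−∞,0]}, equipped with the subspace topology of ℂ×ℂ, is simply connected. -/
/-!
Scaling `(z, w)` by `t ∈ [0, 1]` turns `1 + z * conj w` into `1 + t² * z * conj w`, a point of the
segment from `1` to `1 + z * conj w`. The slit plane is star-convex about `1`, so `𝒮` is
star-convex about the origin, hence contractible and in particular simply connected.
-/

open Complex ComplexConjugate

open scoped ComplexOrder in
lemma Complex.nonpos_iff_exists_ofReal {z : ℂ} : z ≤ 0 ↔ ∃ r : ℝ, r ≤ 0 ∧ z = r := by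
  constructor
  · intro hz
    obtain ⟨hre, him⟩ := nonpos_iff.1 hz
    exact ⟨z.re, hre, ext rfl (by simpa using him)⟩
  · rintro ⟨r, hr, rfl⟩
    exact_mod_cast hr

lemma Complex.mem_slitPlane_iff_not_exists_nonpos {z : ℂ} :
    z ∈ slitPlane ↔ ¬∃ r : ℝ, r ≤ 0 ∧ z = r :=
  mem_slitPlane_iff_not_le_zero.trans (not_congr nonpos_iff_exists_ofReal)

lemma StarConvex.preimage_add_of_smul_eq_sq_smul {E F : Type*} [AddCommGroup E] [Module ℝ E]
    [AddCommGroup F] [Module ℝ F] {c : F} {s : Set F} (hs : StarConvex ℝ c s) {q : E → F}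
    (hq : ∀ (t : ℝ) x, q (t • x) = t ^ 2 • q x) : StarConvex ℝ 0 {x | c + q x ∈ s} := by
  intro x hx a b _ hb hab
  have hb1 : b ≤ 1 := by linarith
  simpa only [Set.mem_ofPred_eq, smul_zero, zero_add, hq] using
    hs.add_smul_mem hx (sq_nonneg b) (pow_le_one₀ hb hb1)

lemma Prod.fst_mul_conj_snd_smul (t : ℝ) (p : ℂ × ℂ) :
    (t • p).1 * conj (t • p).2 = t ^ 2 • (p.1 * conj p.2) := by
  simp only [Prod.smul_fst, Prod.smul_snd, real_smul, map_mul, conj_ofReal]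
  push_cast
  ring

/-- The set `𝒮 = {(z,w) ∈ ℂ×ℂ : 1 + z·conj w ∉ (-∞,0]}` is simply connected. -/
theorem S_simply_connected :
    SimplyConnectedSpace
      ({p : ℂ × ℂ | ¬∃ r : ℝ, r ≤ 0 ∧ 1 + p.1 * conj p.2 = (r : ℂ)} : Set (ℂ × ℂ)) := by
  have hS : {p : ℂ × ℂ | ¬∃ r : ℝ, r ≤ 0 ∧ 1 + p.1 * conj p.2 = (r : ℂ)} =
      {p | 1 + p.1 * conj p.2 ∈ slitPlane} := by
    simp only [mem_slitPlane_iff_not_exists_nonpos]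
  have hstar : StarConvex ℝ 0 {p : ℂ × ℂ | 1 + p.1 * conj p.2 ∈ slitPlane} :=
    starConvex_one_slitPlane.preimage_add_of_smul_eq_sq_smul Prod.fst_mul_conj_snd_smul
  rw [hS]
  have := hstar.contractibleSpace ⟨0, by simp⟩
  exact SimplyConnectedSpace.ofContractible _
end

section
/- Let α, β ∈ ℂ with |α|²+|β|² = 1, let a < b be reals, and let γ : [a,b] → ℂ be a C¹ curve with −conj(β)·γ(t) + conj(α) ≠ 0 for all t ∈ [a,b]. Let uγ(t) = (α·γ(t)+β)/(−conj(β)·γ(t)+conj(α)) and set j(z) = (−conj(β)·z+conj(α))^{−2}. Then exp(i·∫_a^b ρ_{uγ(t)}((uγ)'(t)) dt) = (j(γ(b))/conj(j(γ(b)))) · (conj(j(γ(a)))/j(γ(a))) · exp(i·∫_a^b ρ_{γ(t)}(γ'(t)) dt). -/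
open Complex ComplexConjugate

/-- The primitive `ρ` of the Kähler form of `ℂP¹`: `ρ_z(v) = 4·Im(conj z·v)/(1+|z|²)`. -/
noncomputable def rho (z v : ℂ) : ℝ := 4 * ((conj z) * v).im / (1 + ‖z‖ ^ 2)

/-- The Möbius action of `u = (α,β) ∈ SU(2)` on the affine chart of `ℂP¹`. -/
noncomputable def uMob (α β z : ℂ) : ℂ := (α * z + β) / (-(conj β) * z + conj α)

/-- The automorphy factor of `u = (α,β) ∈ SU(2)`: `j(u,z) = (-conj β·z + conj α)⁻²`. -/
noncomputable def jFactor (α β z : ℂ) : ℂ := (-(conj β) * z + conj α) ^ (-2 : ℤ)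

/-!
Write `d(z) = -conj β · z + conj α`, so that `j = d⁻²` and `(u ∘ γ)' = j(γ) · γ'`. Because `u`
preserves the Fubini–Study form, `ρ` changes under `u` only by the closed form `-4 d(arg d)`:
`ρ_{u z}(j v) = ρ_z(v) - 4 Im(d'(z) v / d(z))`. Along `γ` the correction integrates to
`-4 Im ∫ (d ∘ γ)'/(d ∘ γ)`, and `exp ∫ₐᵇ (d ∘ γ)'/(d ∘ γ) = d(γ b)/d(γ a)` because
`exp(-∫ₐᵗ (d ∘ γ)'/(d ∘ γ)) · d(γ t)` has zero derivative. Hence the phase `exp(-4i Im ∫ …)` is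
`(j/conj j)(γ b) · (conj j/j)(γ a)`.
-/

open Set MeasureTheory

section LogDeriv

variable {a b : ℝ} {D D' : ℝ → ℂ}

theorem exp_integral_div_eq_div (hab : a ≤ b)
    (hD : ∀ t ∈ Icc a b, HasDerivWithinAt D (D' t) (Icc a b) t)
    (hD' : ContinuousOn D' (Icc a b)) (hne : ∀ t ∈ Icc a b, D t ≠ 0) :
    exp (∫ t in a..b, D' t / D t) = D b / D a := by
  have hw : ContinuousOn (fun t => D' t / D t) (Icc a b) :=
    hD'.div (fun t ht => (hD t ht).continuousWithinAt) hne
  set F : ℝ → ℂ := fun s => ∫ t in a..s, D' t / D t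
  have hF : ∀ s ∈ Icc a b, HasDerivWithinAt F (D' s / D s) (Icc a b) s := by
    intro s hs
    have : Fact (s ∈ Icc a b) := ⟨hs⟩
    exact intervalIntegral.integral_hasDerivWithinAt_right
      ((hw.mono (Icc_subset_Icc_right hs.2)).intervalIntegrable_of_Icc hs.1)
      (hw.stronglyMeasurableAtFilter_nhdsWithin measurableSet_Icc s) (hw s hs)
  have hH : ∀ s ∈ Icc a b, HasDerivWithinAt (fun s => exp (-F s) * D s) 0 (Icc a b) s := by
    intro s hs
    refine ((hF s hs).neg.cexp.mul (hD s hs)).congr_deriv ?_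
    field_simp [hne s hs]
    ring
  have hconst := constant_of_has_deriv_right_zero (fun s hs => (hH s hs).continuousWithinAt)
    (fun s hs => (hH s (Ico_subset_Icc_self hs)).mono_of_mem_nhdsWithin
      (Icc_mem_nhdsGE_of_mem hs)) b ⟨hab, le_rfl⟩
  simp only [F, intervalIntegral.integral_same, neg_zero, exp_zero, one_mul, exp_neg] at hconst
  rw [eq_div_iff (hne a ⟨le_rfl, hab⟩), ← hconst]
  field_simp

theorem exp_two_mul_I_integral_im_div (hab : a ≤ b)
    (hD : ∀ t ∈ Icc a b, HasDerivWithinAt D (D' t) (Icc a b) t)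
    (hD' : ContinuousOn D' (Icc a b)) (hne : ∀ t ∈ Icc a b, D t ≠ 0) :
    exp (2 * I * ↑(∫ t in a..b, (D' t / D t).im)) = D b / conj (D b) * (conj (D a) / D a) := by
  have hne' : ∀ t ∈ Icc a b, conj (D t) ≠ 0 := fun t ht => (map_ne_zero _).2 (hne t ht)
  have hDconj : ∀ t ∈ Icc a b, HasDerivWithinAt (fun t => conj (D t)) (conj (D' t)) (Icc a b) t :=
    fun t ht => (hD t ht).star
  have hwc : ContinuousOn (fun t => D' t / D t) (Icc a b) :=
    hD'.div (fun t ht => (hD t ht).continuousWithinAt) hne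
  have hw : IntervalIntegrable (fun t => D' t / D t) volume a b :=
    hwc.intervalIntegrable_of_Icc hab
  have hwconj : IntervalIntegrable (fun t => conj (D' t) / conj (D t)) volume a b := by
    simpa only [Function.comp_def, map_div₀] using
      (continuous_conj.comp_continuousOn hwc).intervalIntegrable_of_Icc (μ := volume) hab
  have hsub : 2 * I * ↑(∫ t in a..b, (D' t / D t).im) =
      (∫ t in a..b, D' t / D t) - ∫ t in a..b, conj (D' t) / conj (D t) := by
    rw [← intervalIntegral.integral_sub hw hwconj]
    simp only [← map_div₀, Complex.sub_conj, intervalIntegral.integral_mul_const,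
      intervalIntegral.integral_ofReal, intervalIntegral.integral_const_mul]
    push_cast
    ring
  rw [hsub, exp_sub, exp_integral_div_eq_div hab hD hD' hne,
    exp_integral_div_eq_div hab hDconj (continuous_conj.comp_continuousOn hD') hne']
  field_simp [hne a ⟨le_rfl, hab⟩, hne b ⟨hab, le_rfl⟩, hne' a ⟨le_rfl, hab⟩]

theorem exp_neg_four_mul_I_integral_im_div (hab : a ≤ b)
    (hD : ∀ t ∈ Icc a b, HasDerivWithinAt D (D' t) (Icc a b) t)
    (hD' : ContinuousOn D' (Icc a b)) (hne : ∀ t ∈ Icc a b, D t ≠ 0) :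
    exp (-(4 * I * ↑(∫ t in a..b, (D' t / D t).im))) =
      D b ^ (-2 : ℤ) / conj (D b ^ (-2 : ℤ)) * (conj (D a ^ (-2 : ℤ)) / D a ^ (-2 : ℤ)) := by
  have hDa := hne a ⟨le_rfl, hab⟩
  have hDb := hne b ⟨hab, le_rfl⟩
  have hDa' : conj (D a) ≠ 0 := (map_ne_zero _).2 hDa
  have hDb' : conj (D b) ≠ 0 := (map_ne_zero _).2 hDb
  rw [show -(4 * I * ↑(∫ t in a..b, (D' t / D t).im)) =
      ((-2 : ℤ) : ℂ) * (2 * I * ↑(∫ t in a..b, (D' t / D t).im)) by push_cast; ring,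
    exp_int_mul, exp_two_mul_I_integral_im_div hab hD hD' hne]
  simp only [zpow_neg, zpow_ofNat, map_inv₀, map_pow, div_pow, mul_pow]
  field_simp

end LogDeriv

lemma continuous_rho : Continuous fun p : ℂ × ℂ => rho p.1 p.2 :=
  Continuous.div (by fun_prop) (by fun_prop) fun p => by positivity

section Mobius

variable {α β : ℂ}

lemma hasDerivAt_uMob (hu : ‖α‖ ^ 2 + ‖β‖ ^ 2 = 1) {z : ℂ} (hd : -(conj β) * z + conj α ≠ 0) :
    HasDerivAt (uMob α β) (jFactor α β z) z := by
  have hu' : α * conj α + β * conj β = 1 := by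
    rw [Complex.mul_conj', Complex.mul_conj']; exact_mod_cast hu
  have hquot := (((hasDerivAt_id' z).const_mul α).add_const β).div
    (((hasDerivAt_id' z).const_mul (-(conj β))).add_const (conj α)) hd
  refine hquot.congr_deriv ?_
  rw [jFactor, zpow_neg, ← one_div]
  norm_cast
  congr 1
  linear_combination hu'

lemma one_add_norm_uMob_sq (hu : ‖α‖ ^ 2 + ‖β‖ ^ 2 = 1) (z : ℂ)
    (hd : -(conj β) * z + conj α ≠ 0) :
    1 + ‖uMob α β z‖ ^ 2 = (1 + ‖z‖ ^ 2) / ‖-(conj β) * z + conj α‖ ^ 2 := by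
  have hu' : α * conj α + β * conj β = 1 := by
    rw [Complex.mul_conj', Complex.mul_conj']; exact_mod_cast hu
  have hsum : ‖-(conj β) * z + conj α‖ ^ 2 + ‖α * z + β‖ ^ 2 = 1 + ‖z‖ ^ 2 := by
    apply Complex.ofReal_injective
    push_cast
    simp only [← Complex.mul_conj', map_add, map_mul, map_neg, Complex.conj_conj]
    linear_combination (1 + z * conj z) * hu'
  rw [uMob, norm_div, div_pow, ← hsum]
  generalize -(conj β) * z + conj α = d at hd ⊢
  field_simp

lemma conj_uMob_mul_jFactor_mul (z v : ℂ) (hd : -(conj β) * z + conj α ≠ 0) :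
    conj (uMob α β z) * (jFactor α β z * v) * ‖-(conj β) * z + conj α‖ ^ 2 =
      conj z * v - (1 + ‖z‖ ^ 2) * (-(conj β) * v / (-(conj β) * z + conj α)) := by
  have hnum : conj (α * z + β) =
      conj z * (-(conj β) * z + conj α) + (1 + z * conj z) * conj β := by
    simp only [map_add, map_mul]; ring
  rw [uMob, jFactor, zpow_neg, map_div₀, hnum, ← Complex.mul_conj', ← Complex.mul_conj']
  generalize -(conj β) * z + conj α = d at hd ⊢
  have hd' : conj d ≠ 0 := (map_ne_zero _).2 hd
  field_simp
  ring

lemma rho_uMob_jFactor_mul (hu : ‖α‖ ^ 2 + ‖β‖ ^ 2 = 1) (z v : ℂ)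
    (hd : -(conj β) * z + conj α ≠ 0) :
    rho (uMob α β z) (jFactor α β z * v) =
      rho z v - 4 * (-(conj β) * v / (-(conj β) * z + conj α)).im := by
  have him := congrArg Complex.im (conj_uMob_mul_jFactor_mul z v hd)
  simp only [← Complex.ofReal_pow, ← Complex.ofReal_one, ← Complex.ofReal_add,
    Complex.im_mul_ofReal, Complex.sub_im, Complex.im_ofReal_mul] at him
  have hS : 0 < 1 + ‖z‖ ^ 2 := by positivity
  rw [rho, rho, one_add_norm_uMob_sq hu z hd, div_div_eq_mul_div, mul_assoc, him]
  field_simp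

lemma rho_uMob_comp_deriv (hu : ‖α‖ ^ 2 + ‖β‖ ^ 2 = 1) {γ : ℝ → ℂ} {v : ℂ} {t : ℝ}
    (hγ : HasDerivAt γ v t) (hd : -(conj β) * γ t + conj α ≠ 0) :
    rho (uMob α β (γ t)) (deriv (fun s => uMob α β (γ s)) t) =
      rho (γ t) v - 4 * (-(conj β) * v / (-(conj β) * γ t + conj α)).im := by
  have hcomp : HasDerivAt (fun s => uMob α β (γ s)) (jFactor α β (γ t) * v) t :=
    (hasDerivAt_uMob hu hd).comp t hγ
  rw [hcomp.deriv, rho_uMob_jFactor_mul hu _ _ hd]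

lemma integral_rho_uMob_comp (hu : ‖α‖ ^ 2 + ‖β‖ ^ 2 = 1) {a b : ℝ} (hab : a < b) {γ : ℝ → ℂ}
    (hγ : ContDiffOn ℝ 1 γ (Icc a b)) (hden : ∀ t ∈ Icc a b, -(conj β) * γ t + conj α ≠ 0) :
    ∫ t in a..b, rho (uMob α β (γ t)) (deriv (fun s => uMob α β (γ s)) t) =
      (∫ t in a..b, rho (γ t) (deriv γ t)) - 4 * ∫ t in a..b,
        (-(conj β) * derivWithin γ (Icc a b) t / (-(conj β) * γ t + conj α)).im := by
  set γ' := derivWithin γ (Icc a b)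
  have hγ'c : ContinuousOn γ' (Icc a b) :=
    hγ.continuousOn_derivWithin (uniqueDiffOn_Icc hab) le_rfl
  have hIoo : uIoo a b = Ioo a b := uIoo_of_le hab.le
  have hγIoo : ∀ t ∈ uIoo a b, HasDerivAt γ (γ' t) t := fun t ht => by
    rw [hIoo] at ht
    exact ((hγ.differentiableOn one_ne_zero) t (Ioo_subset_Icc_self ht)).hasDerivWithinAt.hasDerivAt
      (Icc_mem_nhds ht.1 ht.2)
  have hρc : IntervalIntegrable (fun t => rho (γ t) (γ' t)) volume a b :=
    (continuous_rho.comp_continuousOn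
      (hγ.continuousOn.prodMk hγ'c)).intervalIntegrable_of_Icc hab.le
  have himc :
      IntervalIntegrable (fun t => (-(conj β) * γ' t / (-(conj β) * γ t + conj α)).im) volume a b :=
    (continuous_im.comp_continuousOn ((continuousOn_const.mul hγ'c).div
      ((continuousOn_const.mul hγ.continuousOn).add continuousOn_const)
      hden)).intervalIntegrable_of_Icc hab.le
  have hρ : ∫ t in a..b, rho (γ t) (deriv γ t) = ∫ t in a..b, rho (γ t) (γ' t) :=
    intervalIntegral.integral_congr_uIoo fun t ht => by rw [(hγIoo t ht).deriv]
  calc _ = ∫ t in a..b,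
          rho (γ t) (γ' t) - 4 * (-(conj β) * γ' t / (-(conj β) * γ t + conj α)).im :=
        intervalIntegral.integral_congr_uIoo fun t ht =>
          rho_uMob_comp_deriv hu (hγIoo t ht) (hden t (Ioo_subset_Icc_self (hIoo ▸ ht)))
    _ = _ := by
      rw [intervalIntegral.integral_sub hρc (himc.const_mul 4), intervalIntegral.integral_const_mul,
        hρ]

end Mobius

/-- Equation (6.4) in the proof of Lemma 6.1 of the paper, for `M = ℂP¹`:
`exp(i∫_{uγ} ρ) = (j(g,γ(b))/conj j(g,γ(b)))·(conj j(g,γ(a))/j(g,γ(a)))·exp(i∫_γ ρ)`. -/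
theorem exp_path_integral_transformation (α β : ℂ)
    (hu : ‖α‖ ^ 2 + ‖β‖ ^ 2 = 1)
    (a b : ℝ) (hab : a < b) (γ : ℝ → ℂ) (hγ : ContDiffOn ℝ 1 γ (Set.Icc a b))
    (hden : ∀ t ∈ Set.Icc a b, -(conj β) * γ t + conj α ≠ 0) :
    Complex.exp (Complex.I *
        ((∫ t in a..b, rho (uMob α β (γ t)) (deriv (fun s => uMob α β (γ s)) t)) : ℝ)) =
      jFactor α β (γ b) / conj (jFactor α β (γ b)) *
        (conj (jFactor α β (γ a)) / jFactor α β (γ a)) *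
        Complex.exp (Complex.I * ((∫ t in a..b, rho (γ t) (deriv γ t)) : ℝ)) := by
  have hd : ∀ t ∈ Icc a b, HasDerivWithinAt (fun t => -(conj β) * γ t + conj α)
      (-(conj β) * derivWithin γ (Icc a b) t) (Icc a b) t := fun t ht =>
    ((((hγ.differentiableOn one_ne_zero) t ht).hasDerivWithinAt).const_mul _).add_const _
  have hd' : ContinuousOn (fun t => -(conj β) * derivWithin γ (Icc a b) t) (Icc a b) :=
    continuousOn_const.mul (hγ.continuousOn_derivWithin (uniqueDiffOn_Icc hab) le_rfl)
  rw [integral_rho_uMob_comp hu hab hγ hden, ofReal_sub, mul_sub, sub_eq_neg_add, exp_add,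
    ofReal_mul, ofReal_ofNat, ← mul_assoc, mul_comm I,
    exp_neg_four_mul_I_integral_im_div hab.le hd hd' hden]
  rfl
end
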